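/- arXiv:2101.08917 — 5 statements merged into one kernel-verified Lean document; each statement's English description precedes it below -/
import Mathlib

section
/- The relation ~ on the set of trees on d nodes, defined by T' ~ T if and only if T' can be obtained from T by selecting a set S of leaves of T no two of which share a common neighbor and swapping each leaf in S with its unique neighbor, is an equivalence relation (reflexive, symmetric, and transitive). -/
/-- A leaf of a graph: a vertex with a unique neighbor. -/
def IsLeaf {d : ℕ} (G : SimpleGraph (Fin d)) (v : Fin d) : Prop :=
  ∃! w, G.Adj v w

/-- A permutation that swaps a set of leaves (no two of which can share a
common neighbor, since the swap is a function) with their unique neighbors,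
fixing everything else. -/
def IsLeafSwapPerm {d : ℕ} (G : SimpleGraph (Fin d)) (e : Equiv.Perm (Fin d)) : Prop :=
  (∀ v, e (e v) = v) ∧
  ∀ v, e v ≠ v → (IsLeaf G v ∧ G.Adj v (e v)) ∨ (IsLeaf G (e v) ∧ G.Adj v (e v))

/-- The graph obtained by relabeling `G` along a permutation. -/
def relabel {d : ℕ} (G : SimpleGraph (Fin d)) (e : Equiv.Perm (Fin d)) :
    SimpleGraph (Fin d) :=
  G.map e.toEmbedding

/-- The equivalence class `[T]`: all graphs obtained from `G` by swapping a set of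
leaves (with pairwise distinct neighbors) with their neighbors. -/
def eqClass {d : ℕ} (G : SimpleGraph (Fin d)) : Set (SimpleGraph (Fin d)) :=
  {H | ∃ e : Equiv.Perm (Fin d), IsLeafSwapPerm G e ∧ H = relabel G e}

section Helpers

variable {d : ℕ} {G : SimpleGraph (Fin d)} {a b e f : Equiv.Perm (Fin d)}
variable {v w x y : Fin d}

lemma relabel_adj (G : SimpleGraph (Fin d)) (e : Equiv.Perm (Fin d)) (x y : Fin d) :
    (relabel G e).Adj x y ↔ G.Adj (e.symm x) (e.symm y) := by
  unfold relabel
  rw [SimpleGraph.map_adj]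
  constructor
  · rintro ⟨u, w, huw, rfl, rfl⟩
    simpa using huw
  · intro h
    exact ⟨e.symm x, e.symm y, h, by simp, by simp⟩

lemma inv_symm (he : ∀ v, e (e v) = v) (v : Fin d) : e.symm v = e v := by
  rw [Equiv.symm_apply_eq]; exact (he v).symm

lemma relabel_adj_inv (he : ∀ v, e (e v) = v) (x y : Fin d) :
    (relabel G e).Adj x y ↔ G.Adj (e x) (e y) := by
  rw [relabel_adj, inv_symm he, inv_symm he]

lemma relabel_relabel (he : ∀ v, e (e v) = v) : relabel (relabel G e) e = G := by
  ext x y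
  rw [relabel_adj_inv he, relabel_adj_inv he, he x, he y]

lemma isLeaf_relabel (he : ∀ v, e (e v) = v) (v : Fin d) (hv : IsLeaf G v) :
    IsLeaf (relabel G e) (e v) := by
  obtain ⟨u, hu, huniq⟩ := hv
  refine ⟨e u, ?_, fun w hw' => ?_⟩
  · show (relabel G e).Adj (e v) (e u)
    rw [relabel_adj_inv he, he, he]; exact hu
  · have hw : (relabel G e).Adj (e v) w := hw'
    rw [relabel_adj_inv he, he] at hw
    have hwu : e w = u := huniq _ hw
    calc w = e (e w) := (he w).symm
    _ = e u := by rw [hwu]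

lemma isLeaf_relabel_iff (he : ∀ v, e (e v) = v) :
    IsLeaf (relabel G e) (e v) ↔ IsLeaf G v := by
  refine ⟨fun h => ?_, isLeaf_relabel he v⟩
  have := isLeaf_relabel (G := relabel G e) he _ h
  rwa [relabel_relabel he, he] at this

lemma isLeafSwapPerm_relabel (heS : IsLeafSwapPerm G e) : IsLeafSwapPerm (relabel G e) e := by
  obtain ⟨he, hS⟩ := heS
  refine ⟨he, fun v hv => ?_⟩
  rcases hS v hv with ⟨hl, hadj⟩ | ⟨hl, hadj⟩
  · right
    refine ⟨isLeaf_relabel he v hl, ?_⟩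
    rw [relabel_adj_inv he, he]; exact hadj.symm
  · left
    refine ⟨?_, by rw [relabel_adj_inv he, he]; exact hadj.symm⟩
    have := isLeaf_relabel he (e v) hl
    rwa [he] at this

/-- Conjugation of a leaf-swap perm of `relabel G e` back to `G`. -/
def conjPerm (e f : Equiv.Perm (Fin d)) : Equiv.Perm (Fin d) := e.trans (f.trans e)

lemma conjPerm_apply (e f : Equiv.Perm (Fin d)) (v : Fin d) :
    conjPerm e f v = e (f (e v)) := rfl

lemma isLeafSwapPerm_conj (heS : IsLeafSwapPerm G e)
    (hfS : IsLeafSwapPerm (relabel G e) f) : IsLeafSwapPerm G (conjPerm e f) := by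
  obtain ⟨he, hSe⟩ := heS
  obtain ⟨hf, hSf⟩ := hfS
  constructor
  · intro v
    simp only [conjPerm_apply]
    rw [he, hf, he]
  · intro v hv
    have hv' : f (e v) ≠ e v := by
      intro h
      apply hv
      rw [conjPerm_apply, h, he]
    rcases hSf (e v) hv' with ⟨hl, hadj⟩ | ⟨hl, hadj⟩
    · left
      have hleaf : IsLeaf G v := (isLeaf_relabel_iff (v := v) he).mp hl
      refine ⟨hleaf, ?_⟩
      rw [relabel_adj_inv he, he] at hadj
      rw [conjPerm_apply]; exact hadj
    · right
      constructor
      · rw [conjPerm_apply]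
        have h1 : IsLeaf (relabel G e) (e (e (f (e v)))) := by rwa [he]
        exact (isLeaf_relabel_iff he).mp h1
      · rw [relabel_adj_inv he, he] at hadj
        rw [conjPerm_apply]; exact hadj

lemma leaf_unique (hv : IsLeaf G v) (h1 : G.Adj v w) (h2 : G.Adj v x) : w = x := by
  obtain ⟨u, _, hu⟩ := hv
  rw [hu w h1, hu x h2]

lemma swap_adj (ha : IsLeafSwapPerm G a) (h : a v ≠ v) : G.Adj v (a v) := by
  rcases ha.2 v h with ⟨_, h'⟩ | ⟨_, h'⟩ <;> exact h'

lemma chain (ha : IsLeafSwapPerm G a) (hb : IsLeafSwapPerm G b)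
    (h1 : a v ≠ v) (h2 : b v ≠ v) (h3 : a v ≠ b v) :
    IsLeaf G (a v) ∧ IsLeaf G (b v) ∧ a (b v) = b v ∧ b (a v) = a v := by
  have adja := swap_adj ha h1
  have adjb := swap_adj hb h2
  have hnl : ¬ IsLeaf G v := fun hl => h3 (leaf_unique hl adja adjb)
  have la : IsLeaf G (a v) := by
    rcases ha.2 v h1 with ⟨hl, _⟩ | ⟨hl, _⟩
    · exact absurd hl hnl
    · exact hl
  have lb : IsLeaf G (b v) := by
    rcases hb.2 v h2 with ⟨hl, _⟩ | ⟨hl, _⟩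
    · exact absurd hl hnl
    · exact hl
  have hab : a (b v) = b v := by
    by_contra hne
    have hadj2 : G.Adj (b v) (a (b v)) := swap_adj ha hne
    have h4 : a (b v) = v := leaf_unique lb hadj2 adjb.symm
    have h5 := congrArg a h4
    rw [ha.1] at h5
    exact h3 h5.symm
  have hba : b (a v) = a v := by
    by_contra hne
    have hadj2 : G.Adj (a v) (b (a v)) := swap_adj hb hne
    have h4 : b (a v) = v := leaf_unique la hadj2 adja.symm
    have h5 := congrArg b h4
    rw [hb.1] at h5
    exact h3 h5
  exact ⟨la, lb, hab, hba⟩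

/-- The "repaired" composite of two leaf swaps `a` (applied second) and `b`
(applied first). -/
def hFn (a b : Equiv.Perm (Fin d)) : Fin d → Fin d := fun v =>
  if a v = v ∧ a (b v) ≠ b v then b v
  else if b v = v ∧ b (a v) ≠ a v then v
  else a (b v)

lemma hFn_case1 (h1 : a v = v) (h2 : a (b v) ≠ b v) : hFn a b v = b v :=
  if_pos ⟨h1, h2⟩

lemma hFn_case2 (h0 : a v ≠ v) (h1 : b v = v) (h2 : b (a v) ≠ a v) : hFn a b v = v := by
  unfold hFn
  rw [if_neg (fun hc => h0 hc.1), if_pos ⟨h1, h2⟩]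

lemma hFn_else (h1 : ¬(a v = v ∧ a (b v) ≠ b v)) (h2 : ¬(b v = v ∧ b (a v) ≠ a v)) :
    hFn a b v = a (b v) := by
  unfold hFn
  rw [if_neg h1, if_neg h2]

/-- Master classification lemma: all the pointwise facts we need about `hFn`
and `k := b ∘ a ∘ hFn a b`. -/
lemma spec (ha : IsLeafSwapPerm G a) (hb : IsLeafSwapPerm G b) (v : Fin d) :
    hFn a b (hFn a b v) = v ∧
    (hFn a b v = v ∨ hFn a b v = a v ∨ hFn a b v = b v) ∧
    b (a (hFn a b (b (a (hFn a b v))))) = v ∧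
    (b (a (hFn a b v)) = v ∨
      ∃ n, IsLeaf G v ∧ IsLeaf G (b (a (hFn a b v))) ∧ G.Adj v n ∧
        G.Adj (b (a (hFn a b v))) n ∧ b (a (hFn a b n)) = n) := by
  have ia := ha.1
  have ib := hb.1
  by_cases hA : a v = v
  · by_cases hB : b v = v
    · -- C0 : fixed by both
      have hv : hFn a b v = v := by
        rw [hFn_else (by simp [hA, hB]) (by simp [hA, hB]), hB, hA]
      have hk : b (a (hFn a b v)) = v := by rw [hv, hA, hB]
      refine ⟨by rw [hv, hv], Or.inl hv, ?_, Or.inl hk⟩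
      rw [hk]; exact hk
    · by_cases hC : a (b v) = b v
      · -- C1 : b-only pair {v, b v}
        have hv : hFn a b v = b v := by
          rw [hFn_else (by simp [hC]) (by simp [hB]), hC]
        have hbv : hFn a b (b v) = v := by
          have g1 : ¬(a (b v) = b v ∧ a (b (b v)) ≠ b (b v)) := by
            rintro ⟨_, hx⟩
            apply hx
            rw [ib]
            exact hA
          have g2 : ¬(b (b v) = b v ∧ b (a (b v)) ≠ a (b v)) := by
            rintro ⟨hx, _⟩
            rw [ib] at hx
            exact hB hx.symm
          rw [hFn_else g1 g2, ib, hA]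
        have hk : b (a (hFn a b v)) = v := by rw [hv, hC, ib]
        refine ⟨by rw [hv, hbv], Or.inr (Or.inr hv), ?_, Or.inl hk⟩
        rw [hk]; exact hk
      · -- C4 : v is the leaf p; q := b v, r := a q
        have hq2 : b (b v) ≠ b v := by
          intro h
          rw [ib] at h
          exact hB h.symm
        have hq3 : a (b v) ≠ b (b v) := by
          intro h
          rw [ib] at h
          have h5 := congrArg a h
          rw [ia] at h5
          exact hB (h5.trans hA)
        obtain ⟨lr, lv0, har, hbr⟩ := chain ha hb hC hq2 hq3
        have lv : IsLeaf G v := by rwa [ib] at lv0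
        have hv : hFn a b v = b v := hFn_case1 hA hC
        have hhq : hFn a b (b v) = v := by
          have g1 : ¬(a (b v) = b v ∧ a (b (b v)) ≠ b (b v)) := fun hc => hC hc.1
          have g2 : ¬(b (b v) = b v ∧ b (a (b v)) ≠ a (b v)) := fun hc => hq2 hc.1
          rw [hFn_else g1 g2, ib, hA]
        have hrr : hFn a b (a (b v)) = a (b v) := by
          refine hFn_case2 ?_ hbr ?_
          · intro h
            rw [ia] at h
            exact hC h.symm
          · intro h
            rw [ia] at h
            exact hq2 h
        have hkv : b (a (hFn a b v)) = a (b v) := by rw [hv]; exact hbr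
        refine ⟨by rw [hv, hhq], Or.inr (Or.inr hv), ?_, ?_⟩
        · rw [hkv, hrr, ia, ib]
        · right
          refine ⟨b v, lv, ?_, swap_adj hb hB, ?_, ?_⟩
          · rw [hkv]; exact lr
          · rw [hkv]
            exact (swap_adj ha hC).symm
          · rw [hhq, hA]
  · by_cases hB : b v = v
    · by_cases hC : b (a v) = a v
      · -- C2 : a-only pair {v, a v}
        have hv : hFn a b v = a v := by
          have g1 : ¬(a v = v ∧ a (b v) ≠ b v) := fun hc => hA hc.1
          have g2 : ¬(b v = v ∧ b (a v) ≠ a v) := fun hc => hc.2 hC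
          rw [hFn_else g1 g2, hB]
        have hav : hFn a b (a v) = v := by
          have g1 : ¬(a (a v) = a v ∧ a (b (a v)) ≠ b (a v)) := by
            rintro ⟨hx, _⟩
            rw [ia] at hx
            exact hA hx.symm
          have g2 : ¬(b (a v) = a v ∧ b (a (a v)) ≠ a (a v)) := by
            rintro ⟨_, hx⟩
            apply hx
            rw [ia, hB]
          rw [hFn_else g1 g2, hC, ia]
        have hk : b (a (hFn a b v)) = v := by rw [hv, ia, hB]
        refine ⟨by rw [hv, hav], Or.inr (Or.inl hv), ?_, Or.inl hk⟩
        rw [hk]; exact hk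
      · -- C6 : v is the leaf r; q := a v, p := b q
        have hq1 : a (a v) ≠ a v := by
          intro h
          rw [ia] at h
          exact hA h.symm
        have hq3 : a (a v) ≠ b (a v) := by
          intro h
          rw [ia] at h
          have h5 := congrArg b h
          rw [ib, hB] at h5
          exact hA h5.symm
        obtain ⟨lv0, lp, hap, hbv0⟩ := chain ha hb hq1 hC hq3
        have lv : IsLeaf G v := by rwa [ia] at lv0
        have hv : hFn a b v = v := hFn_case2 hA hB hC
        have hk : b (a (hFn a b v)) = b (a v) := by rw [hv]
        have hp : hFn a b (b (a v)) = a v := by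
          have g1 : a (b (a v)) = b (a v) := hap
          have g2 : a (b (b (a v))) ≠ b (b (a v)) := by
            rw [ib]
            intro h
            rw [ia] at h
            exact hA h.symm
          rw [hFn_case1 g1 g2, ib]
        have hq' : hFn a b (a v) = b (a v) := by
          have g1 : ¬(a (a v) = a v ∧ a (b (a v)) ≠ b (a v)) := fun hc => hq1 hc.1
          have g2 : ¬(b (a v) = a v ∧ b (a (a v)) ≠ a (a v)) := fun hc => hC hc.1
          rw [hFn_else g1 g2, hap]
        refine ⟨by rw [hv, hv], Or.inl hv, ?_, ?_⟩
        · rw [hk, hp, ia, hB]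
        · right
          refine ⟨a v, lv, ?_, swap_adj ha hA, ?_, ?_⟩
          · rw [hk]; exact lp
          · rw [hk]
            exact (swap_adj hb hC).symm
          · rw [hq', hap, ib]
    · by_cases hC : a v = b v
      · -- C3 : common pair
        have hv : hFn a b v = v := by
          have g1 : ¬(a v = v ∧ a (b v) ≠ b v) := fun hc => hA hc.1
          have g2 : ¬(b v = v ∧ b (a v) ≠ a v) := fun hc => hB hc.1
          rw [hFn_else g1 g2, ← hC, ia]
        have hk : b (a (hFn a b v)) = v := by rw [hv, hC, ib]
        refine ⟨by rw [hv, hv], Or.inl hv, ?_, Or.inl hk⟩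
        rw [hk]; exact hk
      · -- C5 : v is the middle vertex q
        obtain ⟨la, lb', hab, hba⟩ := chain ha hb hA hB hC
        have hv : hFn a b v = b v := by
          have g1 : ¬(a v = v ∧ a (b v) ≠ b v) := fun hc => hA hc.1
          have g2 : ¬(b v = v ∧ b (a v) ≠ a v) := fun hc => hB hc.1
          rw [hFn_else g1 g2, hab]
        have hp : hFn a b (b v) = v := by
          have g2 : a (b (b v)) ≠ b (b v) := by
            rw [ib]
            exact hA
          rw [hFn_case1 hab g2, ib]
        have hk : b (a (hFn a b v)) = v := by rw [hv, hab, ib]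
        refine ⟨by rw [hv, hp], Or.inr (Or.inr hv), ?_, Or.inl hk⟩
        rw [hk]; exact hk

lemma k_mono (ha : IsLeafSwapPerm G a) (hb : IsLeafSwapPerm G b) (x y : Fin d)
    (hxy : G.Adj x y) :
    G.Adj (b (a (hFn a b x))) (b (a (hFn a b y))) := by
  rcases (spec ha hb x).2.2.2 with hx | ⟨n, lx, lkx, axn, kxn, hn⟩
  · rcases (spec ha hb y).2.2.2 with hy | ⟨m, ly, lky, aym, kym, hm⟩
    · rw [hx, hy]; exact hxy
    · rw [hx]
      have hxm : x = m := leaf_unique ly hxy.symm aym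
      rw [hxm]
      exact kym.symm
  · have hyn : y = n := leaf_unique lx hxy axn
    rw [hyn, hn]
    exact kxn

lemma k_iff (ha : IsLeafSwapPerm G a) (hb : IsLeafSwapPerm G b) (x y : Fin d) :
    G.Adj x y ↔ G.Adj (b (a (hFn a b x))) (b (a (hFn a b y))) := by
  refine ⟨k_mono ha hb x y, fun h => ?_⟩
  have := k_mono ha hb _ _ h
  rwa [(spec ha hb x).2.2.1, (spec ha hb y).2.2.1] at this

lemma comp_exists (ha : IsLeafSwapPerm G a) (hb : IsLeafSwapPerm G b) :
    ∃ h : Equiv.Perm (Fin d), IsLeafSwapPerm G h ∧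
      ∀ x y, (relabel G h).Adj x y ↔ G.Adj (b (a x)) (b (a y)) := by
  have hinv : Function.Involutive (hFn a b) := fun v => (spec ha hb v).1
  refine ⟨hinv.toPerm, ⟨fun v => hinv v, ?_⟩, ?_⟩
  · intro v hv
    have hv' : hFn a b v ≠ v := hv
    rcases (spec ha hb v).2.1 with h0 | h1 | h2
    · exact absurd h0 hv'
    · have hav : a v ≠ v := by rw [← h1]; exact hv'
      rcases ha.2 v hav with ⟨hl, hadj⟩ | ⟨hl, hadj⟩
      · left
        exact ⟨hl, by show G.Adj v (hFn a b v); rw [h1]; exact hadj⟩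
      · right
        constructor
        · show IsLeaf G (hFn a b v); rw [h1]; exact hl
        · show G.Adj v (hFn a b v); rw [h1]; exact hadj
    · have hbv : b v ≠ v := by rw [← h2]; exact hv'
      rcases hb.2 v hbv with ⟨hl, hadj⟩ | ⟨hl, hadj⟩
      · left
        exact ⟨hl, by show G.Adj v (hFn a b v); rw [h2]; exact hadj⟩
      · right
        constructor
        · show IsLeaf G (hFn a b v); rw [h2]; exact hl
        · show G.Adj v (hFn a b v); rw [h2]; exact hadj
  · intro x y
    rw [relabel_adj_inv (fun v => hinv v)]
    show G.Adj (hFn a b x) (hFn a b y) ↔ _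
    have hk := k_iff ha hb (hFn a b x) (hFn a b y)
    rw [(spec ha hb x).1, (spec ha hb y).1] at hk
    exact hk

end Helpers

/-- the relation `T' ~ T ↔ T' ∈ [T]` on trees on `d` nodes is an
equivalence relation. -/
theorem eqClass_equivalence (d : ℕ) :
    Equivalence (fun T' T : {G : SimpleGraph (Fin d) // G.IsTree} =>
      (T' : SimpleGraph (Fin d)) ∈ eqClass (T : SimpleGraph (Fin d))) := by
  constructor
  · rintro ⟨T, hT⟩
    refine ⟨Equiv.refl _, ⟨fun v => rfl, fun v hv => absurd rfl hv⟩, ?_⟩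
    have hrel : relabel T (Equiv.refl (Fin d)) = T := by
      ext x y
      rw [relabel_adj_inv (fun v => rfl)]
      simp
    exact hrel.symm
  · rintro ⟨T', hT'⟩ ⟨T, hT⟩ ⟨e, heS, hrel⟩
    refine ⟨e, ?_, ?_⟩
    · show IsLeafSwapPerm (T' : SimpleGraph (Fin d)) e
      rw [show (T' : SimpleGraph (Fin d)) = relabel T e from hrel]
      exact isLeafSwapPerm_relabel heS
    · show (T : SimpleGraph (Fin d)) = relabel (T' : SimpleGraph (Fin d)) e
      rw [show (T' : SimpleGraph (Fin d)) = relabel T e from hrel,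
        relabel_relabel heS.1]
  · rintro ⟨Tx, hx⟩ ⟨Ty, hy⟩ ⟨Tz, hz⟩ ⟨f, hfS, hxy⟩ ⟨e, heS, hyz⟩
    simp only at hxy hyz hfS heS ⊢
    subst hyz
    have hbS : IsLeafSwapPerm Tz (conjPerm e f) := isLeafSwapPerm_conj heS hfS
    obtain ⟨h, hhS, hadj⟩ := comp_exists heS hbS
    refine ⟨h, hhS, ?_⟩
    ext u w
    rw [hxy, relabel_adj_inv hfS.1, relabel_adj_inv heS.1, hadj u w,
      conjPerm_apply, conjPerm_apply, heS.1, heS.1]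
end

section
/- For d ≥ 4, the minimum over all trees T on d nodes of the size of the equivalence class [T] equals 4, and this minimum is achieved by the path (chain) on d nodes. -/
/-!
Relabelling along a leaf-swap permutation `e` (an involution) makes `e x` a leaf exactly when
`x` was one, so the leaves of the relabelled tree detect which swaps were made. If two leaves
`u`, `v` have distinct neighbours `a`, `b` (which are not leaves once `d ≥ 3`), swapping or not
swapping `u ↔ a` and `v ↔ b` gives four different trees. Otherwise all leaves hang off one
vertex `c`; for `d ≥ 4` it has a third neighbour, and degree counting in a tree gives at least
`deg c ≥ 3` leaves, so swapping one of them or none gives four trees. A leaf-swap permutation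
is determined by its values on the leaves, and the path has only two leaves, so for the path
these four trees are all of `[T]`.
-/

open Equiv Finset

namespace SimpleGraph

variable {V : Type*} {G : SimpleGraph V}

theorem Connected.exists_adj_of_mem_of_notMem (hG : G.Connected) {S : Set V} {x y : V}
    (hx : x ∈ S) (hy : y ∉ S) : ∃ u ∈ S, ∃ v ∉ S, G.Adj u v := by
  obtain ⟨p⟩ := hG.preconnected x y
  obtain ⟨e, -, he₁, he₂⟩ := p.exists_boundary_dart S hx hy
  exact ⟨_, he₁, _, he₂, e.adj⟩

theorem IsTree.degree_le_card_leaves [Fintype V] [Nontrivial V] [DecidableRel G.Adj]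
    (hG : G.IsTree) (c : V) : G.degree c ≤ #{v | G.degree v = 1} := by
  classical
  have hsum : ∑ v, G.degree v + 2 = 2 * Fintype.card V := by
    rw [sum_degrees_eq_twice_card_edges, ← hG.card_edgeFinset]
    ring
  have hpt : ∀ v ∈ univ.erase c, 2 ≤ G.degree v + if G.degree v = 1 then 1 else 0 := by
    intro v _
    have := hG.preconnected.degree_pos_of_nontrivial v
    split_ifs <;> omega
  have hrest := Finset.sum_le_sum hpt
  rw [sum_const, card_erase_of_mem (mem_univ c), card_univ, smul_eq_mul, sum_add_distrib] at hrest
  have hc := add_sum_erase univ (fun v => G.degree v) (mem_univ c)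
  have hleaves :
      ∑ v ∈ univ.erase c, (if G.degree v = 1 then 1 else 0) ≤ #{v | G.degree v = 1} := by
    rw [card_filter]
    exact sum_le_sum_of_subset (erase_subset c univ)
  have := Fintype.card_pos (α := V)
  omega

theorem isTree_pathGraph {n : ℕ} (hn : n ≠ 0) : (pathGraph n).IsTree := by
  obtain ⟨n, rfl⟩ := Nat.exists_eq_succ_of_ne_zero hn
  rw [isTree_iff_connected_and_card]
  refine ⟨pathGraph_connected n,
    le_antisymm ?_ (pathGraph_connected n).card_vert_le_card_edgeSet_add_one⟩
  rw [Nat.card_eq_fintype_card (α := Fin (n + 1)), Fintype.card_fin, add_le_add_iff_right]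
  let edge (i : Fin n) : (pathGraph (n + 1)).edgeSet :=
    ⟨s(i.castSucc, i.succ), by simp [pathGraph_adj]⟩
  have hedge : Function.Surjective edge := by
    rintro ⟨e, he⟩
    induction e using Sym2.ind with | _ x y => ?_
    rw [mem_edgeSet, pathGraph_adj] at he
    rcases he with h | h
    · refine ⟨⟨x, by omega⟩, Subtype.ext (Sym2.eq_iff.2 ?_)⟩
      exact .inl ⟨Fin.ext rfl, Fin.ext (by simp [h])⟩
    · refine ⟨⟨y, by omega⟩, Subtype.ext (Sym2.eq_iff.2 ?_)⟩
      exact .inr ⟨Fin.ext rfl, Fin.ext (by simp [h])⟩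
  simpa using Nat.card_le_card_of_surjective edge hedge

end SimpleGraph

section SwapIf

variable {α : Type*} [DecidableEq α]

def swapIf (s : Bool) (u a : α) : Perm α :=
  bif s then swap u a else 1

theorem swapIf_apply_left (s : Bool) (u a : α) : swapIf s u a u = bif s then a else u := by
  cases s <;> simp [swapIf]

theorem swapIf_apply_of_ne (s : Bool) {u a x : α} (hu : x ≠ u) (ha : x ≠ a) :
    swapIf s u a x = x := by
  cases s <;> simp [swapIf, swap_apply_of_ne_of_ne hu ha]

theorem disjoint_swapIf (s t : Bool) {u a v b : α} (huv : u ≠ v) (hub : u ≠ b) (hav : a ≠ v)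
    (hab : a ≠ b) : (swapIf s u a).Disjoint (swapIf t v b) := by
  intro x
  by_cases hx : x = u ∨ x = a
  · right
    rcases hx with rfl | rfl
    exacts [swapIf_apply_of_ne t huv hub, swapIf_apply_of_ne t hav hab]
  · rw [not_or] at hx
    exact .inl (swapIf_apply_of_ne s hx.1 hx.2)

end SwapIf

section LeafSwap

variable {d : ℕ} {G : SimpleGraph (Fin d)}

theorem not_isLeaf_of_isLeaf_adj (hG : G.Connected) (hd : 3 ≤ d) {u a : Fin d}
    (hu : IsLeaf G u) (hua : G.Adj u a) : ¬IsLeaf G a := by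
  intro ha
  obtain ⟨w, -, hw⟩ := exists_mem_notMem_of_card_lt_card (s := {u, a}) (t := univ)
    (by simpa using (card_le_two (a := u) (b := a)).trans_lt (by omega))
  obtain ⟨x, hx, y, hy, hxy⟩ :=
    hG.exists_adj_of_mem_of_notMem (S := ↑({u, a} : Finset (Fin d))) (x := u) (by simp)
      (by simpa using hw)
  simp only [coe_insert, coe_singleton, Set.mem_insert_iff, Set.mem_singleton_iff, not_or] at hx hy
  rcases hx with rfl | rfl
  · exact hy.2 (hu.unique hxy hua)
  · exact hy.1 (ha.unique hxy hua.symm)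

theorem three_le_degree_of_isLeaf_adj [DecidableRel G.Adj] (hG : G.Connected) (hd : 4 ≤ d)
    {x y c : Fin d} (hxy : x ≠ y) (hx : IsLeaf G x) (hxc : G.Adj x c) (hy : IsLeaf G y)
    (hyc : G.Adj y c) : 3 ≤ G.degree c := by
  obtain ⟨w, -, hw⟩ := exists_mem_notMem_of_card_lt_card (s := {x, y, c}) (t := univ)
    (by simpa using (card_le_three (a := x) (b := y) (c := c)).trans_lt (by omega))
  obtain ⟨p, hp, z, hz, hcz⟩ :=
    hG.exists_adj_of_mem_of_notMem (S := ↑({x, y, c} : Finset (Fin d))) (x := x) (by simp)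
      (by simpa using hw)
  simp only [coe_insert, coe_singleton, Set.mem_insert_iff, Set.mem_singleton_iff, not_or] at hp hz
  rcases hp with rfl | rfl | rfl
  · exact (hz.2.2 (hx.unique hcz hxc)).elim
  · exact (hz.2.2 (hy.unique hcz hyc)).elim
  · rw [← SimpleGraph.card_neighborFinset_eq_degree]
    refine le_of_eq_of_le ?_ (card_le_card (s := {x, y, z}) ?_)
    · exact (card_eq_three.2 ⟨x, y, z, hxy, Ne.symm hz.1, Ne.symm hz.2.1, rfl⟩).symm
    · intro v hv
      simp only [mem_insert, mem_singleton] at hv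
      rcases hv with rfl | rfl | rfl <;> simp [hxc.symm, hyc.symm, hcz]

theorem isLeaf_relabel_apply (e : Perm (Fin d)) (v : Fin d) :
    IsLeaf (relabel G e) (e v) ↔ IsLeaf G v :=
  (e.existsUnique_congr fun _ => SimpleGraph.map_adj_apply.symm).symm

theorem isLeafSwapPerm_one : IsLeafSwapPerm G 1 :=
  ⟨fun _ => rfl, fun _ h => (h rfl).elim⟩

theorem isLeafSwapPerm_swap {u a : Fin d} (hu : IsLeaf G u) (hua : G.Adj u a) :
    IsLeafSwapPerm G (swap u a) := by
  refine ⟨swap_apply_self u a, fun x hx => ?_⟩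
  rcases eq_or_ne x u with rfl | hxu
  · rw [swap_apply_left]
    exact .inl ⟨hu, hua⟩
  rcases eq_or_ne x a with rfl | hxa
  · rw [swap_apply_right]
    exact .inr ⟨hu, hua.symm⟩
  exact (hx (swap_apply_of_ne_of_ne hxu hxa)).elim

namespace IsLeafSwapPerm

variable {e e' : Perm (Fin d)}

theorem isLeaf_relabel_iff (he : IsLeafSwapPerm G e) (x : Fin d) :
    IsLeaf (relabel G e) x ↔ IsLeaf G (e x) := by
  conv_lhs => rw [← he.1 x]
  exact isLeaf_relabel_apply e (e x)

theorem apply_eq_or_adj (he : IsLeafSwapPerm G e) (x : Fin d) : e x = x ∨ G.Adj x (e x) :=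
  or_iff_not_imp_left.2 fun h => (he.2 x h).elim And.right And.right

theorem apply_eq_of_isLeaf (he : IsLeafSwapPerm G e) {u a : Fin d} (hu : IsLeaf G u)
    (hua : G.Adj u a) : e u = u ∨ e u = a :=
  (he.apply_eq_or_adj u).imp_right fun h => hu.unique h hua

theorem mul (he : IsLeafSwapPerm G e) (he' : IsLeafSwapPerm G e') (h : e.Disjoint e') :
    IsLeafSwapPerm G (e * e') := by
  have hcomm : ∀ x, e' (e x) = e (e' x) := fun x => by
    simpa using (DFunLike.congr_fun h.commute.eq x).symm
  refine ⟨fun x => by simp [hcomm, he.1, he'.1], fun x hx => ?_⟩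
  rcases h x with hex | he'x
  · have hmul : (e * e') x = e' x := by rw [Perm.mul_apply, ← hcomm, hex]
    rw [hmul] at hx ⊢
    exact he'.2 x hx
  · have hmul : (e * e') x = e x := by rw [Perm.mul_apply, he'x]
    rw [hmul] at hx ⊢
    exact he.2 x hx

/-- A non-leaf moved by `e` is the image of a leaf, so it is sent back to that leaf. -/
theorem apply_eq_of_apply_ne (he : IsLeafSwapPerm G e) (he' : IsLeafSwapPerm G e')
    (h : ∀ x, IsLeaf G x → e x = e' x) {x : Fin d} (hx : ¬IsLeaf G x) (hex : e x ≠ x) :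
    e' x = e x := by
  have hleaf : IsLeaf G (e x) := ((he.2 x hex).resolve_left fun h => hx h.1).1
  calc e' x = e' (e' (e x)) := by rw [← h _ hleaf, he.1]
    _ = e x := he'.1 _

theorem ext (he : IsLeafSwapPerm G e) (he' : IsLeafSwapPerm G e')
    (h : ∀ x, IsLeaf G x → e x = e' x) : e = e' := by
  refine Equiv.ext fun x => ?_
  by_cases hx : IsLeaf G x
  · exact h x hx
  by_cases hex : e x = x
  · by_cases he'x : e' x = x
    · rw [hex, he'x]
    · exact apply_eq_of_apply_ne he' he (fun y hy => (h y hy).symm) hx he'x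
  · exact (apply_eq_of_apply_ne he he' h hx hex).symm

end IsLeafSwapPerm

theorem card_le_ncard_eqClass {ι : Type*} [Finite ι] (f : ι → Perm (Fin d))
    (hf : ∀ i, IsLeafSwapPerm G (f i)) (hinj : Function.Injective fun i => relabel G (f i)) :
    Nat.card ι ≤ (eqClass G).ncard := by
  rw [← Set.ncard_range_of_injective hinj]
  exact Set.ncard_le_ncard (Set.range_subset_iff.2 fun i => ⟨f i, hf i, rfl⟩)

end LeafSwap

section TwoLeaves

variable {d : ℕ} {G : SimpleGraph (Fin d)} {u a v b : Fin d}

def pairSwap (u a v b : Fin d) (st : Bool × Bool) : Perm (Fin d) :=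
  swapIf st.1 u a * swapIf st.2 v b

theorem pairSwap_apply_left (huv : u ≠ v) (hub : u ≠ b) (st : Bool × Bool) :
    pairSwap u a v b st u = bif st.1 then a else u := by
  rw [pairSwap, Perm.mul_apply, swapIf_apply_of_ne _ huv hub, swapIf_apply_left]

theorem pairSwap_apply_right (huv : u ≠ v) (hav : a ≠ v) (hub : u ≠ b) (hab : a ≠ b)
    (st : Bool × Bool) : pairSwap u a v b st v = bif st.2 then b else v := by
  rw [pairSwap, Perm.mul_apply, swapIf_apply_left]
  cases st.2
  · exact swapIf_apply_of_ne _ huv.symm hav.symm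
  · exact swapIf_apply_of_ne _ hub.symm hab.symm

theorem isLeafSwapPerm_swapIf (hu : IsLeaf G u) (hua : G.Adj u a) (s : Bool) :
    IsLeafSwapPerm G (swapIf s u a) := by
  cases s
  exacts [isLeafSwapPerm_one, isLeafSwapPerm_swap hu hua]

theorem isLeafSwapPerm_pairSwap (hu : IsLeaf G u) (hua : G.Adj u a) (hv : IsLeaf G v)
    (hvb : G.Adj v b) (huv : u ≠ v) (hub : u ≠ b) (hav : a ≠ v) (hab : a ≠ b)
    (st : Bool × Bool) : IsLeafSwapPerm G (pairSwap u a v b st) := by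
  exact (isLeafSwapPerm_swapIf hu hua st.1).mul (isLeafSwapPerm_swapIf hv hvb st.2)
    (disjoint_swapIf _ _ huv hub hav hab)

theorem four_le_ncard_eqClass_of_isLeaf_adj_ne (hu : IsLeaf G u) (hua : G.Adj u a)
    (ha : ¬IsLeaf G a) (hv : IsLeaf G v) (hvb : G.Adj v b) (hb : ¬IsLeaf G b) (hab : a ≠ b) :
    4 ≤ (eqClass G).ncard := by
  have huv : u ≠ v := fun h => hab (hu.unique hua (h ▸ hvb))
  have hub : u ≠ b := fun h => hb (h ▸ hu)
  have hav : a ≠ v := fun h => ha (h ▸ hv)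
  have hperm := isLeafSwapPerm_pairSwap hu hua hv hvb huv hub hav hab
  have hleft : ∀ st, ¬IsLeaf (relabel G (pairSwap u a v b st)) u ↔ st.1 := fun st => by
    rw [(hperm st).isLeaf_relabel_iff, pairSwap_apply_left huv hub]
    cases st.1 <;> simp [hu, ha]
  have hright : ∀ st, ¬IsLeaf (relabel G (pairSwap u a v b st)) v ↔ st.2 := fun st => by
    rw [(hperm st).isLeaf_relabel_iff, pairSwap_apply_right huv hav hub hab]
    cases st.2 <;> simp [hv, hb]
  have hinj : Function.Injective fun st => relabel G (pairSwap u a v b st) := by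
    intro p q (hpq : relabel G _ = relabel G _)
    have hp₁ := hleft p
    have hp₂ := hright p
    rw [hpq] at hp₁ hp₂
    exact Prod.ext (Bool.eq_iff_iff.2 (hp₁.symm.trans (hleft q)))
      (Bool.eq_iff_iff.2 (hp₂.symm.trans (hright q)))
  simpa using card_le_ncard_eqClass _ hperm hinj

theorem ncard_eqClass_le_four (hu : IsLeaf G u) (hua : G.Adj u a) (hv : IsLeaf G v)
    (hvb : G.Adj v b) (huv : u ≠ v) (hub : u ≠ b) (hav : a ≠ v) (hab : a ≠ b)
    (hleaves : ∀ w, IsLeaf G w → w = u ∨ w = v) : (eqClass G).ncard ≤ 4 := by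
  let f (st : Bool × Bool) := relabel G (pairSwap u a v b st)
  have hsub : eqClass G ⊆ Set.range f := by
    rintro _ ⟨e, he, rfl⟩
    refine ⟨(decide (e u = a), decide (e v = b)), congrArg (relabel G) ?_⟩
    refine (isLeafSwapPerm_pairSwap hu hua hv hvb huv hub hav hab _).ext he fun w hw => ?_
    rcases hleaves w hw with rfl | rfl
    · rw [pairSwap_apply_left huv hub]
      rcases he.apply_eq_of_isLeaf hu hua with h | h <;> simp [h, hua.ne]
    · rw [pairSwap_apply_right huv hav hub hab]
      rcases he.apply_eq_of_isLeaf hv hvb with h | h <;> simp [h, hvb.ne]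
  calc (eqClass G).ncard ≤ (Set.range f).ncard := Set.ncard_le_ncard hsub (Set.finite_range f)
    _ ≤ Nat.card (Bool × Bool) := Finite.card_range_le f
    _ = 4 := by simp

end TwoLeaves

section Trees

variable {d : ℕ} {G : SimpleGraph (Fin d)}

theorem card_add_one_le_ncard_eqClass {c : Fin d} (hc : ¬IsLeaf G c) (S : Finset (Fin d))
    (hS : ∀ l ∈ S, IsLeaf G l ∧ G.Adj l c) : #S + 1 ≤ (eqClass G).ncard := by
  let f (o : Option S) : Perm (Fin d) := o.elim 1 fun l => swap l c
  have hperm : ∀ o, IsLeafSwapPerm G (f o)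
    | none => isLeafSwapPerm_one
    | some l => isLeafSwapPerm_swap (hS l l.2).1 (hS l l.2).2
  have hleaf : ∀ o (l : S), IsLeaf (relabel G (f o)) l ↔ o ≠ some l := by
    intro o l
    rw [(hperm o).isLeaf_relabel_iff]
    rcases o with _ | l'
    · simpa [f] using (hS l l.2).1
    rcases eq_or_ne l' l with rfl | hne
    · simpa [f] using hc
    · simp only [f, Option.elim_some, ne_eq, Option.some.injEq, hne, not_false_eq_true, iff_true]
      rw [swap_apply_of_ne_of_ne (Subtype.coe_injective.ne hne.symm) (hS l l.2).2.ne]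
      exact (hS l l.2).1
  have hinj : Function.Injective fun o => relabel G (f o) := by
    intro o o' (h : relabel G _ = relabel G _)
    refine Option.ext fun l => ?_
    have hl := hleaf o l
    rw [h, hleaf o' l] at hl
    simpa [Option.mem_def] using not_iff_not.2 hl.symm
  simpa using card_le_ncard_eqClass f hperm hinj

theorem four_le_ncard_eqClass (hG : G.IsTree) (hd : 4 ≤ d) : 4 ≤ (eqClass G).ncard := by
  classical
  have hnonleaf : ∀ {u a}, IsLeaf G u → G.Adj u a → ¬IsLeaf G a :=
    not_isLeaf_of_isLeaf_adj hG.connected (by omega)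
  by_cases hne : ∃ u a v b, IsLeaf G u ∧ G.Adj u a ∧ IsLeaf G v ∧ G.Adj v b ∧ a ≠ b
  · obtain ⟨u, a, v, b, hu, hua, hv, hvb, hab⟩ := hne
    exact four_le_ncard_eqClass_of_isLeaf_adj_ne hu hua (hnonleaf hu hua) hv hvb
      (hnonleaf hv hvb) hab
  have : Nontrivial (Fin d) := Fin.nontrivial_iff_two_le.2 (by omega)
  obtain ⟨x, y, hxy, hx, hy⟩ := hG.exists_ne_and_degree_eq_one
  rw [SimpleGraph.degree_eq_one_iff_existsUnique_adj] at hx hy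
  obtain ⟨c, hxc, -⟩ := id hx
  have hleaf_adj : ∀ v, IsLeaf G v → G.Adj v c := fun v hv => by
    obtain ⟨b, hvb, -⟩ := id hv
    by_contra hvc
    exact hne ⟨x, c, v, b, hx, hxc, hv, hvb, fun h => hvc (h ▸ hvb)⟩
  have hdeg := three_le_degree_of_isLeaf_adj hG.connected hd hxy hx hxc hy (hleaf_adj y hy)
  calc 4 ≤ #{v | G.degree v = 1} + 1 := by
        have := hG.degree_le_card_leaves c
        omega
    _ ≤ (eqClass G).ncard := card_add_one_le_ncard_eqClass (hnonleaf hx hxc) _ fun l hl => by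
        have hleaf : IsLeaf G l :=
          SimpleGraph.degree_eq_one_iff_existsUnique_adj.1 (mem_filter.1 hl).2
        exact ⟨hleaf, hleaf_adj l hleaf⟩

open SimpleGraph in
theorem ncard_eqClass_pathGraph (hd : 4 ≤ d) : (eqClass (pathGraph d)).ncard = 4 := by
  refine le_antisymm ?_ (four_le_ncard_eqClass (isTree_pathGraph (by omega)) hd)
  let u : Fin d := ⟨0, by omega⟩
  let a : Fin d := ⟨1, by omega⟩
  let v : Fin d := ⟨d - 1, by omega⟩
  let b : Fin d := ⟨d - 2, by omega⟩
  have hua : (pathGraph d).Adj u a := by simp [pathGraph_adj, u, a]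
  have hvb : (pathGraph d).Adj v b := by simp only [pathGraph_adj, v, b]; omega
  have hu : IsLeaf (pathGraph d) u :=
    ⟨a, hua, fun x hx => Fin.ext (by simp only [pathGraph_adj, u, a] at hx ⊢; omega)⟩
  have hv : IsLeaf (pathGraph d) v :=
    ⟨b, hvb, fun x hx => Fin.ext (by simp only [pathGraph_adj, v, b] at hx ⊢; omega)⟩
  have hleaves : ∀ w, IsLeaf (pathGraph d) w → w = u ∨ w = v := by
    rintro w ⟨x, -, hx⟩
    by_contra! hw
    simp only [ne_eq, Fin.ext_iff, u, v] at hw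
    have h₁ := hx ⟨w - 1, by omega⟩ (pathGraph_adj.2 (.inr (by simp only; omega)))
    have h₂ := hx ⟨w + 1, by omega⟩ (pathGraph_adj.2 (.inl rfl))
    have := congrArg Fin.val (h₁.trans h₂.symm)
    simp only at this
    omega
  exact ncard_eqClass_le_four hu hua hv hvb
    (Fin.ne_of_val_ne (by simp only [u, v]; omega)) (Fin.ne_of_val_ne (by simp only [u, b]; omega))
    (Fin.ne_of_val_ne (by simp only [a, v]; omega)) (Fin.ne_of_val_ne (by simp only [a, b]; omega))
    hleaves

end Trees

/-- for `d ≥ 4`, the minimum of `|[T]|` over trees `T` on `d` nodes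
equals `4`, and the minimum is achieved by the path (chain) on `d` nodes. -/
theorem min_card_eqClass (d : ℕ) (hd : 4 ≤ d) :
    IsLeast {n : ℕ | ∃ G : SimpleGraph (Fin d), G.IsTree ∧ (eqClass G).ncard = n} 4 ∧
    (eqClass (SimpleGraph.pathGraph d)).ncard = 4 := by
  have hpath := ncard_eqClass_pathGraph hd
  refine ⟨⟨⟨_, SimpleGraph.isTree_pathGraph (by omega), hpath⟩, ?_⟩, hpath⟩
  rintro n ⟨G, hG, rfl⟩
  exact four_le_ncard_eqClass hG hd
end

section
/- Suppose real numbers ρ̂_{j,k} and ρ̃_{j,k} (for 1 ≤ j < k ≤ 4) satisfy |ρ̂_{j,k}| ≥ t/2 > 0 and |ρ̃_{j,k} − ρ̂_{j,k}| < δ where δ = t(1−α)/20 and α ∈ (1/2, 1). If additionally (ρ̃_{1,3} ρ̃_{2,4})/(ρ̃_{1,2} ρ̃_{3,4}) ≤ 2α − 1, then (ρ̂_{1,3} ρ̂_{2,4})/(ρ̂_{1,2} ρ̂_{3,4}) < α. -/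
set_option maxHeartbeats 1000000

lemma ratio_near_one (h tt δ β : ℝ) (hh : 0 < |h|) (hd : |tt - h| < δ)
    (hδβ : δ ≤ β * |h|) : |tt / h - 1| < β := by
  have hne : h ≠ 0 := fun e => by simp [e] at hh
  have heq : tt / h - 1 = (tt - h) / h := by field_simp
  rw [heq, abs_div, div_lt_iff₀ hh]
  linarith

/-- if the empirical correlations `ρ̂` satisfy `|ρ̂| ≥ t/2 > 0`, and
the true noisy correlations `ρ̃` satisfy `|ρ̃ - ρ̂| < δ` with `δ = t(1-α)/20` and
`α ∈ (1/2, 1)`, and if `(ρ̃₁₃ρ̃₂₄)/(ρ̃₁₂ρ̃₃₄) ≤ 2α - 1`, then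
`(ρ̂₁₃ρ̂₂₄)/(ρ̂₁₂ρ̂₃₄) < α`. -/
theorem empirical_ratio_below_threshold
    (h12 h13 h14 h23 h24 h34 t12 t13 t14 t23 t24 t34 t α δ : ℝ)
    (ht : 0 < t / 2) (hα1 : 1 / 2 < α) (hα2 : α < 1)
    (hδ : δ = t * (1 - α) / 20)
    (hb12 : t / 2 ≤ |h12|) (hb13 : t / 2 ≤ |h13|) (hb14 : t / 2 ≤ |h14|)
    (hb23 : t / 2 ≤ |h23|) (hb24 : t / 2 ≤ |h24|) (hb34 : t / 2 ≤ |h34|)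
    (hd12 : |t12 - h12| < δ) (hd13 : |t13 - h13| < δ) (hd14 : |t14 - h14| < δ)
    (hd23 : |t23 - h23| < δ) (hd24 : |t24 - h24| < δ) (hd34 : |t34 - h34| < δ)
    (hratio : (t13 * t24) / (t12 * t34) ≤ 2 * α - 1) :
    (h13 * h24) / (h12 * h34) < α := by
  have hu : 0 < 1 - α := by linarith
  set β : ℝ := (1 - α) / 10 with hβdef
  have hβ0 : 0 < β := by positivity
  have hβ1 : β < 1 := by rw [hβdef]; linarith
  have hδβ : ∀ h' : ℝ, t / 2 ≤ |h'| → δ ≤ β * |h'| := by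
    intro h' hb
    rw [hδ, hβdef]
    nlinarith
  have hp12 : 0 < |h12| := lt_of_lt_of_le ht hb12
  have hp13 : 0 < |h13| := lt_of_lt_of_le ht hb13
  have hp24 : 0 < |h24| := lt_of_lt_of_le ht hb24
  have hp34 : 0 < |h34| := lt_of_lt_of_le ht hb34
  have hn12 : h12 ≠ 0 := fun e => by simp [e] at hp12
  have hn13 : h13 ≠ 0 := fun e => by simp [e] at hp13
  have hn24 : h24 ≠ 0 := fun e => by simp [e] at hp24
  have hn34 : h34 ≠ 0 := fun e => by simp [e] at hp34
  have hs12 := abs_lt.1 (ratio_near_one h12 t12 δ β hp12 hd12 (hδβ h12 hb12))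
  have hs13 := abs_lt.1 (ratio_near_one h13 t13 δ β hp13 hd13 (hδβ h13 hb13))
  have hs24 := abs_lt.1 (ratio_near_one h24 t24 δ β hp24 hd24 (hδβ h24 hb24))
  have hs34 := abs_lt.1 (ratio_near_one h34 t34 δ β hp34 hd34 (hδβ h34 hb34))
  have hps12 : 0 < t12 / h12 := by linarith [hs12.1]
  have hps13 : 0 < t13 / h13 := by linarith [hs13.1]
  have hps24 : 0 < t24 / h24 := by linarith [hs24.1]
  have hps34 : 0 < t34 / h34 := by linarith [hs34.1]
  have hnt12 : t12 ≠ 0 := by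
    intro e; rw [e, zero_div] at hps12; exact lt_irrefl 0 hps12
  have hnt34 : t34 ≠ 0 := by
    intro e; rw [e, zero_div] at hps34; exact lt_irrefl 0 hps34
  -- rewrite hratio in terms of r and the multiplicative perturbations
  have heq : (t13 * t24) / (t12 * t34)
      = (((h13 * h24) / (h12 * h34)) * ((t13 / h13) * (t24 / h24)))
        / ((t12 / h12) * (t34 / h34)) := by
    field_simp
  rw [heq] at hratio
  set r := (h13 * h24) / (h12 * h34) with hr
  rcases le_or_gt r 0 with hr0 | hr0
  · linarith
  set a := t13 / h13
  set b := t24 / h24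
  set c := t12 / h12
  set d := t34 / h34
  have hcd : 0 < c * d := mul_pos hps12 hps34
  have hprod : r * (a * b) ≤ (2 * α - 1) * (c * d) := by
    rw [div_le_iff₀ hcd] at hratio
    linarith
  have hA : (1 - β) ^ 2 < a * b := by nlinarith [hs13.1, hs24.1]
  have hB : c * d < (1 + β) ^ 2 := by nlinarith [hs12.2, hs34.2, hps12, hps34]
  have hα' : 0 < 2 * α - 1 := by linarith
  have hkey2 : r * (1 - β) ^ 2 < (2 * α - 1) * (1 + β) ^ 2 := by
    nlinarith [mul_lt_mul_of_pos_left hA hr0, mul_lt_mul_of_pos_left hB hα']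
  have hfin : (2 * α - 1) * (1 + β) ^ 2 < α * (1 - β) ^ 2 := by
    rw [hβdef]
    nlinarith [hu, mul_pos hu hu, mul_pos (mul_pos hu hu) hu]
  have h1mβ : (0:ℝ) < (1 - β) ^ 2 := pow_pos (by linarith) 2
  nlinarith [hkey2, hfin, h1mβ]
end

section
/- Suppose real numbers ρ̂_{j,k} and ρ̃_{j,k} (for 1 ≤ j < k ≤ 4) satisfy |ρ̂_{j,k}| ≥ t/2 > 0 and |ρ̃_{j,k} − ρ̂_{j,k}| < δ where δ = t(1−α)/20 and α ∈ (1/2,1). If (ρ̃_{1,3} ρ̃_{2,4})/(ρ̃_{1,4} ρ̃_{2,3}) = 1, then (ρ̂_{1,3} ρ̂_{2,4})/(ρ̂_{1,4} ρ̂_{2,3}) > α. -/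
/-! Put `β = (1 - α) / 10`, so that `δ = β · t/2`. Since every `|ρ̂|` is at least `t/2`, each
`ρ̃/ρ̂` is within relative error `β` of `1`. The hypothesis on the `ρ̃`-ratio rewrites the
`ρ̂`-ratio as `(x₁₄ x₂₃)/(x₁₃ x₂₄)` with `x = ρ̃/ρ̂`, which therefore exceeds
`((1 - β)/(1 + β))² ≥ (1 - 2β)² ≥ 1 - 4β > α`. -/

lemma abs_div_sub_one_lt_of_abs_sub_lt {c β h u : ℝ} (hc : 0 < c) (hh : c ≤ |h|)
    (hu : |u - h| < β * c) : |u / h - 1| < β := by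
  have hβ : 0 < β := pos_of_mul_pos_left ((abs_nonneg _).trans_lt hu) hc.le
  have h0 : h ≠ 0 := abs_pos.mp (hc.trans_le hh)
  rw [div_sub_one h0, abs_div, div_lt_iff₀ (abs_pos.mpr h0)]
  calc |u - h| < β * c := hu
    _ ≤ β * |h| := by gcongr

lemma div_mul_div_eq_of_div_mul_div_eq_one {a b c d a' b' c' d' : ℝ}
    (ha : a ≠ 0) (hb : b ≠ 0) (hc : c ≠ 0) (hd : d ≠ 0) (h : a' * b' / (c' * d') = 1) :
    a * b / (c * d) = c' / c * (d' / d) / (a' / a * (b' / b)) := by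
  have hcd : c' * d' ≠ 0 := by rintro h0; simp [h0] at h
  have hab : a' * b' ≠ 0 := by rintro h0; simp [h0] at h
  rw [div_eq_one_iff_eq hcd] at h
  rw [div_mul_div_comm, div_mul_div_comm, div_div_div_eq, ← h]
  field_simp
  exact (div_self hab).symm

lemma sq_div_lt_mul_div_mul {β x₁ x₂ x₃ x₄ : ℝ} (hβ : β < 1) (h₁ : |x₁ - 1| < β)
    (h₂ : |x₂ - 1| < β) (h₃ : |x₃ - 1| < β) (h₄ : |x₄ - 1| < β) :
    ((1 - β) / (1 + β)) ^ 2 < x₁ * x₂ / (x₃ * x₄) := by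
  rw [abs_sub_lt_iff] at h₁ h₂ h₃ h₄
  have hnum : (1 - β) * (1 - β) < x₁ * x₂ :=
    mul_lt_mul'' (by linarith) (by linarith) (by linarith) (by linarith)
  have hden : x₃ * x₄ < (1 + β) * (1 + β) :=
    mul_lt_mul'' (by linarith) (by linarith) (by linarith) (by linarith)
  rw [div_pow, sq, sq]
  exact div_lt_div₀ hnum hden.le (by nlinarith) (by nlinarith)

lemma one_sub_four_mul_le_sq_div {β : ℝ} (h₀ : 0 ≤ β) (h₁ : β ≤ 1 / 2) :
    1 - 4 * β ≤ ((1 - β) / (1 + β)) ^ 2 := by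
  have h : 1 - 2 * β ≤ (1 - β) / (1 + β) := by
    rw [le_div_iff₀ (by linarith)]
    nlinarith
  nlinarith

theorem empirical_ratio_above_threshold_general
    (h13 h14 h23 h24 t13 t14 t23 t24 t α δ : ℝ)
    (ht : 0 < t / 2) (hα1 : 1 / 2 < α) (hα2 : α < 1)
    (hδ : δ = t * (1 - α) / 20)
    (hb13 : t / 2 ≤ |h13|) (hb14 : t / 2 ≤ |h14|)
    (hb23 : t / 2 ≤ |h23|) (hb24 : t / 2 ≤ |h24|)
    (hd13 : |t13 - h13| < δ) (hd14 : |t14 - h14| < δ)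
    (hd23 : |t23 - h23| < δ) (hd24 : |t24 - h24| < δ)
    (hratio : (t13 * t24) / (t14 * t23) = 1) :
    (h13 * h24) / (h14 * h23) > α := by
  set β := (1 - α) / 10 with hβ
  have hδβ : δ = β * (t / 2) := by rw [hδ, hβ]; ring
  have rel {h u : ℝ} (hb : t / 2 ≤ |h|) (hd : |u - h| < δ) : |u / h - 1| < β :=
    abs_div_sub_one_lt_of_abs_sub_lt ht hb (hδβ ▸ hd)
  have ne_zero {h : ℝ} (hb : t / 2 ≤ |h|) : h ≠ 0 := abs_pos.mp (ht.trans_le hb)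
  rw [div_mul_div_eq_of_div_mul_div_eq_one (ne_zero hb13) (ne_zero hb24) (ne_zero hb14)
    (ne_zero hb23) hratio]
  calc α < 1 - 4 * β := by linarith
    _ ≤ ((1 - β) / (1 + β)) ^ 2 := one_sub_four_mul_le_sq_div (by linarith) (by linarith)
    _ < _ := sq_div_lt_mul_div_mul (by linarith) (rel hb14 hd14) (rel hb23 hd23)
        (rel hb13 hd13) (rel hb24 hd24)

/-- if the empirical correlations `ρ̂` satisfy `|ρ̂| ≥ t/2 > 0`, and
the true noisy correlations `ρ̃` satisfy `|ρ̃ - ρ̂| < δ` with `δ = t(1-α)/20` and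
`α ∈ (1/2, 1)`, and if `(ρ̃₁₃ρ̃₂₄)/(ρ̃₁₄ρ̃₂₃) = 1`, then
`(ρ̂₁₃ρ̂₂₄)/(ρ̂₁₄ρ̂₂₃) > α`. -/
theorem empirical_ratio_above_threshold
    (h12 h13 h14 h23 h24 h34 t12 t13 t14 t23 t24 t34 t α δ : ℝ)
    (ht : 0 < t / 2) (hα1 : 1 / 2 < α) (hα2 : α < 1)
    (hδ : δ = t * (1 - α) / 20)
    (hb12 : t / 2 ≤ |h12|) (hb13 : t / 2 ≤ |h13|) (hb14 : t / 2 ≤ |h14|)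
    (hb23 : t / 2 ≤ |h23|) (hb24 : t / 2 ≤ |h24|) (hb34 : t / 2 ≤ |h34|)
    (hd12 : |t12 - h12| < δ) (hd13 : |t13 - h13| < δ) (hd14 : |t14 - h14| < δ)
    (hd23 : |t23 - h23| < δ) (hd24 : |t24 - h24| < δ) (hd34 : |t34 - h34| < δ)
    (hratio : (t13 * t24) / (t14 * t23) = 1) :
    (h13 * h24) / (h14 * h23) > α :=
  empirical_ratio_above_threshold_general h13 h14 h23 h24 t13 t14 t23 t24 t α δ ht hα1 hα2 hδ hb13
    hb14 hb23 hb24 hd13 hd14 hd23 hd24 hratio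
end

section
/- Let p, q ∈ (0,1) with ρ_q = some value in (0,1), and consider two distributions on {+1,−1}^2 of pairs (A,B) with uniform marginals and correlations ρ_q·ρ_max and ρ_q respectively (with ρ_max ∈ (0,1)). The symmetric KL divergence between two tree-structured Ising models on the same node set that differ in exactly one edge, where the differing edge has noisy correlation ρ_q in one model and effective correlation ρ_q·ρ_max in the other (and vice versa), equals 2·atanh(ρ_q)·ρ_q·(1−ρ_max). -/
/-- Inverse hyperbolic tangent. -/
noncomputable def atanh (x : ℝ) : ℝ := (1 / 2) * Real.log ((1 + x) / (1 - x))

/-- The `±1` value associated with a Boolean. -/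
def pmOne (b : Bool) : ℝ := if b then 1 else -1

/-- The distribution of a three-node `±1` Markov chain `u — v — w` with uniform
marginals and correlations `r₁` on edge `(u,v)` and `r₂` on edge `(v,w)`.  The
two tree-structured Ising models of the impossibility construction differ in
exactly one edge and agree after marginalizing out all other nodes, so their KL
divergences reduce to these three-node models. -/
noncomputable def chain3 (r₁ r₂ : ℝ) (s : Bool × Bool × Bool) : ℝ :=
  (1 + r₁ * pmOne s.1 * pmOne s.2.1) * (1 + r₂ * pmOne s.2.1 * pmOne s.2.2) / 8

/-- the symmetric KL divergence between two tree-structured Ising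
models differing in exactly one edge — where, relabelled to the three relevant
nodes `(u, v, w)`, one model is the chain `u — v — w` (edge `(u,v)` with noisy
correlation `ρ_q`, edge `(v,w)` with correlation `ρmax`) and the other is the
chain `u — w — v` (edge `(u,w)` with noisy correlation `ρ_q`, so that the
effective correlation of `(u,v)` is `ρ_q·ρmax`, and edge `(w,v)` with
correlation `ρmax`) — equals `2·atanh(ρ_q)·ρ_q·(1 - ρmax)`. -/
theorem symm_kl_one_edge_difference (ρq ρmax : ℝ)
    (h0q : 0 < ρq) (h1q : ρq < 1) (h0m : 0 < ρmax) (h1m : ρmax < 1)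
    (P Q : Bool × Bool × Bool → ℝ)
    (hP : P = chain3 ρq ρmax)
    (hQ : Q = fun s => (1 + ρq * pmOne s.1 * pmOne s.2.2) *
      (1 + ρmax * pmOne s.2.1 * pmOne s.2.2) / 8) :
    (∑ s : Bool × Bool × Bool, P s * Real.log (P s / Q s)) +
      (∑ s : Bool × Bool × Bool, Q s * Real.log (Q s / P s)) =
    2 * atanh ρq * ρq * (1 - ρmax) := by
  set L : ℝ := Real.log ((1 + ρq) / (1 - ρq)) with hL
  have hq1 : (0:ℝ) < 1 - ρq := by linarith
  have hq2 : (0:ℝ) < 1 + ρq := by linarith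
  have hm1 : (0:ℝ) < 1 - ρmax := by linarith
  have hm2 : (0:ℝ) < 1 + ρmax := by linarith
  have e0 : ∀ x : ℝ, 0 < x → Real.log (x / x) = 0 := by
    intro x hx; rw [div_self (ne_of_gt hx), Real.log_one]
  have r1 : ((1 + ρq) * (1 - ρmax) / 8) / ((1 - ρq) * (1 - ρmax) / 8) = (1 + ρq) / (1 - ρq) := by
    field_simp
  have r2 : ((1 - ρq) * (1 - ρmax) / 8) / ((1 + ρq) * (1 - ρmax) / 8) = (1 - ρq) / (1 + ρq) := by
    field_simp
  have l2 : Real.log ((1 - ρq) / (1 + ρq)) = -L := by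
    rw [hL, Real.log_div (ne_of_gt hq1) (ne_of_gt hq2), Real.log_div (ne_of_gt hq2) (ne_of_gt hq1)]
    ring
  have key : ∀ s : Bool × Bool × Bool,
      P s * Real.log (P s / Q s) + Q s * Real.log (Q s / P s) =
      if s.2.1 = s.2.2 then 0 else ρq * (1 - ρmax) / 4 * L := by
    rintro ⟨a, b, c⟩
    subst hP hQ
    have r1' : (1 + ρq) * (1 + -ρmax) / 8 / ((1 + -ρq) * (1 + -ρmax) / 8)
        = (1 + ρq) / (1 - ρq) := by
      rw [r1.symm]; ring_nf
    have r2' : (1 + -ρq) * (1 + -ρmax) / 8 / ((1 + ρq) * (1 + -ρmax) / 8)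
        = (1 - ρq) / (1 + ρq) := by
      rw [r2.symm]; ring_nf
    rcases a <;> rcases b <;> rcases c <;> norm_num [chain3, pmOne] <;>
      first
      | exact Or.inr (Or.inl (div_self (by positivity)))
      | (rw [r1', r2', l2, hL.symm]; ring)
  rw [← Finset.sum_add_distrib, Finset.sum_congr rfl (fun s _ => key s)]
  rw [Fintype.sum_prod_type]
  simp [Fintype.sum_prod_type, Fintype.sum_bool, atanh, hL]
  ring
end
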